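/- arXiv:2303.03077 — 2 statements merged into one kernel-verified Lean document; each statement's English description precedes it below -/
import Mathlib

section
/- If every step of the recursive resale (purchasing price of h_{j+1} equals max(purchasing price of h_j, second-highest aggregated bid among h_j's children)) is applied along the resale path, then by induction the purchasing price of h_j equals the maximum bid over T_{-h_j}, using the identity T_{-h_{j+1}} = T_{-h_j} ∪ (subtrees of siblings of h_{j+1} under h_j) ∪ {h_j}. -/
open Finset

/-- Max of `f` over a finite set, with floor 0 (bids are nonnegative; empty set gives 0). -/
noncomputable def fmax {V : Type} [DecidableEq V] (s : Finset V) (f : V → ℝ) : ℝ :=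
  s.fold max 0 f

lemma fmax_nonneg {V : Type} [DecidableEq V] (s : Finset V) (f : V → ℝ) :
    0 ≤ fmax s f :=
  (Finset.le_fold_max _).2 (Or.inl le_rfl)

lemma le_fmax {V : Type} [DecidableEq V] {s : Finset V} (f : V → ℝ) {x : V}
    (hx : x ∈ s) : f x ≤ fmax s f :=
  (Finset.le_fold_max _).2 (Or.inr ⟨x, hx, le_rfl⟩)

lemma fmax_le {V : Type} [DecidableEq V] {s : Finset V} {f : V → ℝ} {m : ℝ}
    (h0 : 0 ≤ m) (hs : ∀ x ∈ s, f x ≤ m) : fmax s f ≤ m :=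
  (Finset.fold_max_le _).2 ⟨h0, hs⟩

lemma fmax_empty {V : Type} [DecidableEq V] (f : V → ℝ) : fmax (∅ : Finset V) f = 0 :=
  rfl

lemma fmax_union {V : Type} [DecidableEq V] (s t : Finset V) (f : V → ℝ) :
    fmax (s ∪ t) f = max (fmax s f) (fmax t f) := by
  apply le_antisymm
  · refine fmax_le (le_max_of_le_left (fmax_nonneg s f)) ?_
    intro x hx
    rcases Finset.mem_union.1 hx with hx | hx
    · exact le_max_of_le_left (le_fmax f hx)
    · exact le_max_of_le_right (le_fmax f hx)
  · refine max_le (fmax_le (fmax_nonneg _ f) ?_) (fmax_le (fmax_nonneg _ f) ?_) <;>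
      intro x hx
    · exact le_fmax f (Finset.mem_union_left _ hx)
    · exact le_fmax f (Finset.mem_union_right _ hx)

lemma fmax_singleton {V : Type} [DecidableEq V] (a : V) (f : V → ℝ) (hf : 0 ≤ f a) :
    fmax ({a} : Finset V) f = f a := by
  simp [fmax, max_eq_left hf]

lemma fmax_biUnion {V : Type} [DecidableEq V] (s : Finset V) (t : V → Finset V)
    (f : V → ℝ) :
    fmax (s.biUnion t) f = fmax s (fun c => fmax (t c) f) := by
  apply le_antisymm
  · refine fmax_le (fmax_nonneg _ _) ?_
    intro x hx
    rcases Finset.mem_biUnion.1 hx with ⟨c, hc, hxc⟩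
    exact le_trans (le_fmax f hxc) (le_fmax (fun c => fmax (t c) f) hc)
  · refine fmax_le (fmax_nonneg _ _) ?_
    intro c hc
    refine fmax_le (fmax_nonneg _ _) ?_
    intro x hx
    exact le_fmax f (Finset.mem_biUnion.2 ⟨c, hc, hx⟩)

/-- If every step of the recursive resale (purchasing price of h⁽ʲ⁺¹⁾
equals the max of the purchasing price of h⁽ʲ⁾, the aggregated bids of the other
children of h⁽ʲ⁾ and the bid of h⁽ʲ⁾) is applied along the resale path, then by
induction the purchasing price of h⁽ʲ⁾ equals the maximum bid over T₋h⁽ʲ⁾, using the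
identity T₋h⁽ʲ⁺¹⁾ = T₋h⁽ʲ⁾ ∪ (subtrees of the siblings of h⁽ʲ⁺¹⁾ under h⁽ʲ⁾) ∪ {h⁽ʲ⁾}. -/
theorem resale_price_induction
    {V : Type} [Fintype V] [DecidableEq V]
    (T : Finset V) (children subtree : V → Finset V) (v b : V → ℝ) (S : V)
    (hv : ∀ i, 0 ≤ v i) (hvS : v S = 0)
    (hT : T = subtree S)
    -- each node's aggregated bid equals the maximum bid in its subtree
    (hb : ∀ i, b i = fmax (subtree i) v)
    -- resale path: h 0 = S, each h (j+1) a child of h j with the highest aggregated bid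
    (h : ℕ → V) (k : ℕ) (hh0 : h 0 = S)
    (hchild : ∀ j < k, h (j + 1) ∈ children (h j))
    (htop : ∀ j < k, ∀ c ∈ children (h j), b c ≤ b (h (j + 1)))
    -- the set identity relating successive "outside" sets
    (hident : ∀ j < k,
      T \ subtree (h (j + 1)) =
        (T \ subtree (h j)) ∪ ((children (h j)).erase (h (j + 1))).biUnion subtree
          ∪ {h j})
    -- purchasing price recursion
    (p : ℕ → ℝ) (hp0 : p 0 = 0)
    (hp : ∀ j < k, p (j + 1) =
      max (p j) (max (fmax ((children (h j)).erase (h (j + 1))) b) (v (h j)))) :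
    ∀ j, 1 ≤ j → j ≤ k → p j = fmax (T \ subtree (h j)) v := by
  -- stronger statement including j = 0
  have main : ∀ j, j ≤ k → p j = fmax (T \ subtree (h j)) v := by
    intro j
    induction j with
    | zero =>
      intro _
      rw [hp0, hh0, hT, Finset.sdiff_self, fmax_empty]
    | succ j ih =>
      intro hjk
      have hjk' : j < k := hjk
      have hbu : fmax (((children (h j)).erase (h (j + 1))).biUnion subtree) v
          = fmax ((children (h j)).erase (h (j + 1))) b := by
        rw [fmax_biUnion]
        congr 1
        funext c
        rw [hb c]
      rw [hp j hjk', ih (le_of_lt hjk'), hident j hjk', fmax_union, fmax_union,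
        fmax_singleton _ _ (hv _), hbu, max_assoc]
  intro j _ hjk
  exact main j hjk
end

section
/- In the sequential resale auction, if a buyer passes her aggregated bid to more than one inviter, her bid may reach the resale path via multiple routes, and her resulting purchasing price (if she becomes a local buyer) is at least her purchasing price under passing to a single inviter; formally, on any graph where a node's bid is counted in two sibling branches, the second-highest aggregated bid among the relevant local seller's children is weakly larger than when the bid is counted in one branch only. -/
open Finset

/-- Second-highest value of `f` over a nonempty finite set: the minimum, over choices of
a removed element, of the maximum over the rest. -/
noncomputable def smax {V : Type} [DecidableEq V] (s : Finset V) (hne : s.Nonempty)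
    (f : V → ℝ) : ℝ :=
  s.inf' hne (fun c => fmax (s.erase c) f)

lemma fmax_mono {V : Type} [DecidableEq V] (s : Finset V) (f g : V → ℝ)
    (h : ∀ x ∈ s, f x ≤ g x) : fmax s f ≤ fmax s g := by
  classical
  induction s using Finset.induction_on with
  | empty => simp [fmax]
  | @insert a t hx ih =>
    simp only [fmax, Finset.fold_insert hx] at *
    exact max_le_max (h a (Finset.mem_insert_self a t))
      (ih fun x hx' => h x (Finset.mem_insert_of_mem hx'))

/-- In the sequential resale auction, if a buyer passes her aggregated bid
`β` to more than one inviter, so that `β` is counted in the aggregated bid of a second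
sibling branch `c₀` of a local seller's children (i.e. `b' c₀ = max (b c₀) β` and
`b' c = b c` otherwise), then the second-highest aggregated bid among the local seller's
children weakly increases, and hence the selling price `max(p̄, b²ⁿᵈ)` — the deviating
buyer's purchasing price if she becomes a local buyer — is weakly larger. -/
theorem sra_multi_passing_raises_price
    {V : Type} [Fintype V] [DecidableEq V]
    (s : Finset V) (hne : s.Nonempty) (b b' : V → ℝ) (β : ℝ) (pbar : ℝ)
    (c₀ : V) (hc₀ : c₀ ∈ s)
    -- duplication: β is also counted in branch c₀
    (hb' : ∀ c ∈ s, b' c = if c = c₀ then max (b c) β else b c) :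
    smax s hne b ≤ smax s hne b' ∧
      max pbar (smax s hne b) ≤ max pbar (smax s hne b') := by
  have hle : ∀ c ∈ s, b c ≤ b' c := by
    intro c hc
    rw [hb' c hc]
    split <;> simp
  have key : smax s hne b ≤ smax s hne b' := by
    apply Finset.le_inf'
    intro c hc
    refine le_trans (Finset.inf'_le _ hc) (fmax_mono _ _ _ ?_)
    intro x hx
    exact hle x (Finset.mem_of_mem_erase hx)
  exact ⟨key, max_le_max le_rfl key⟩
end
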